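/- For every $\sigma > 0$ and $\theta \in [0, 2\pi)$, the Brownian shift $B_{\sigma, e^{i\theta}}$ on $H^2(\mathbb{T}) \oplus \mathbb{C}$ is irreducible: its only reducing subspaces are $\{0\}$ and the whole space. -/

import Mathlib

/-!
Since `B*B = 1 ⊕ (1 + σ²)`, a reducing subspace `M` is stable under the projection onto `0 ⊕ ℂ`,
so either `M ⊆ H² ⊕ 0` or `(0, 1) ∈ M`. In the first case `B*(f, 0) = (S*f, σ f̂(0))` forces
`f̂(0) = 0` and keeps `(S*f, 0)` in `M`, so every Taylor coefficient of every element of `M`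
vanishes. In the second case `B(0, 1) = (σ, e^{iθ})` puts `(1, 0)` in `M`, the shift then
produces every monomial `(zⁿ, 0)`, and the closed subspace `M` is everything.
-/

open Complex

noncomputable section
set_option linter.unusedSectionVars false

/-- The `E`-valued Hardy space `H²_E(𝕋)`, modeled by the ℓ² space of its
Taylor/Fourier coefficient sequences. -/
abbrev Hardy (E : Type*) [NormedAddCommGroup E] [InnerProductSpace ℂ E] [CompleteSpace E] :=
  lp (fun _ : ℕ => E) 2

variable {E : Type*} [NormedAddCommGroup E] [InnerProductSpace ℂ E] [CompleteSpace E]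

def shiftSeq (f : ℕ → E) : ℕ → E
  | 0 => 0
  | n + 1 => f n

lemma memℓp_shiftSeq {f : ℕ → E} (hf : Memℓp f 2) : Memℓp (shiftSeq f) 2 := by
  have h := hf.summable (by norm_num)
  exact memℓp_gen ((summable_nat_add_iff 1).mp (by simpa [shiftSeq] using h))

/-- The shift `S_E : f ↦ z f` on `H²_E(𝕋)`. -/
def shiftOp (f : Hardy E) : Hardy E := ⟨shiftSeq f, memℓp_shiftSeq (lp.memℓp f)⟩

/-- The inclusion `i_E : E → H²_E(𝕋)` sending `x` to the constant function `x`. -/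
def inclOp (y : E) : Hardy E := lp.single 2 (0 : ℕ) y

/-- The Brownian shift `B^E_{σ, e^{iθ}}` of covariance `σ` and angle `θ` on
`H²_E(𝕋) ⊕ E`: `(f, y) ↦ (zf + σ y, e^{iθ} y)`. -/
def BS (σ θ : ℝ) (v : Hardy E × E) : Hardy E × E :=
  (shiftOp v.1 + (σ : ℂ) • inclOp v.2, Complex.exp (θ * I) • v.2)

lemma memℓp_tailSeq {f : ℕ → E} (hf : Memℓp f 2) : Memℓp (fun n => f (n + 1)) 2 := by
  have h := hf.summable (by norm_num)
  exact memℓp_gen ((summable_nat_add_iff 1).2 h)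

/-- The backward shift `S_E^* : f ↦ (f - f(0))/z` on `H²_E(𝕋)`. -/
def tailOp (f : Hardy E) : Hardy E := ⟨fun n => f (n + 1), memℓp_tailSeq (lp.memℓp f)⟩

/-- The adjoint of the Brownian shift: `(f, y) ↦ (S_E^* f, σ f̂(0) + e^{-iθ} y)`. -/
def BSadj (σ θ : ℝ) (v : Hardy E × E) : Hardy E × E :=
  (tailOp v.1, (σ : ℂ) • (v.1 : ℕ → E) 0 + Complex.exp (-(θ * I)) • v.2)

@[simp] lemma shiftOp_apply_zero (f : Hardy E) : (shiftOp f : ℕ → E) 0 = 0 := rfl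

@[simp] lemma shiftOp_apply_succ (f : Hardy E) (n : ℕ) : (shiftOp f : ℕ → E) (n + 1) = f n := rfl

@[simp] lemma shiftOp_zero : shiftOp (0 : Hardy E) = 0 := by
  ext (_ | _) <;> rfl

@[simp] lemma inclOp_zero : inclOp (0 : E) = 0 := lp.single_zero 2 0

lemma shiftOp_single (n : ℕ) (y : E) :
    shiftOp (lp.single 2 n y) = lp.single 2 (n + 1) y := by
  ext (_ | j)
  · simp [lp.single_apply]
  · simp [Pi.single_apply]

lemma tailOp_shiftOp_add_smul_inclOp (f : Hardy E) (a : ℂ) (y : E) :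
    tailOp (shiftOp f + a • inclOp y) = f := by
  ext n
  change (shiftOp f : ℕ → E) (n + 1) + a • (inclOp y : ℕ → E) (n + 1) = f n
  simp [inclOp]

lemma shiftOp_add_smul_inclOp_apply_zero (f : Hardy E) (a : ℂ) (y : E) :
    ((shiftOp f + a • inclOp y : Hardy E) : ℕ → E) 0 = a • y := by
  change (shiftOp f : ℕ → E) 0 + a • (inclOp y : ℕ → E) 0 = a • y
  simp [inclOp]

lemma BS_inl (σ θ : ℝ) (f : Hardy E) : BS σ θ (f, 0) = (shiftOp f, 0) := by
  simp [BS]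

lemma BS_inr (σ θ : ℝ) (y : E) :
    BS σ θ (0, y) = ((σ : ℂ) • inclOp y, Complex.exp (θ * I) • y) := by
  simp [BS]

lemma BSadj_inl (σ θ : ℝ) (f : Hardy E) :
    BSadj σ θ (f, 0) = (tailOp f, (σ : ℂ) • (f : ℕ → E) 0) := by
  simp [BSadj]

lemma BSadj_BS (σ θ : ℝ) (v : Hardy E × E) :
    BSadj σ θ (BS σ θ v) = (v.1, ((σ : ℂ) ^ 2 + 1) • v.2) := by
  simp only [BSadj, BS, tailOp_shiftOp_add_smul_inclOp, shiftOp_add_smul_inclOp_apply_zero,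
    smul_smul, ← Complex.exp_add, neg_add_cancel, Complex.exp_zero, one_smul, add_smul, sq]

section Reducing

variable {σ : ℝ} (θ : ℝ) {M : Submodule ℂ (Hardy E × E)}

lemma inr_snd_mem_of_BS_reducing (hσ : σ ≠ 0) (hB : ∀ v ∈ M, BS σ θ v ∈ M)
    (hBadj : ∀ v ∈ M, BSadj σ θ v ∈ M) {v : Hardy E × E} (hv : v ∈ M) :
    ((0 : Hardy E), v.2) ∈ M := by
  have hσ2 : ((0 : Hardy E), (σ : ℂ) ^ 2 • v.2) ∈ M := by
    convert M.sub_mem (hBadj _ (hB v hv)) hv using 1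
    ext <;> simp [BSadj_BS, add_smul]
  convert M.smul_mem ((σ : ℂ) ^ 2)⁻¹ hσ2 using 1
  ext <;> simp [smul_smul, hσ]

lemma single_inl_mem_of_BS_invariant (hσ : σ ≠ 0) (hB : ∀ v ∈ M, BS σ θ v ∈ M) {y : E}
    (hy : ((0 : Hardy E), y) ∈ M) (n : ℕ) : (lp.single 2 n y, (0 : E)) ∈ M := by
  induction n with
  | zero =>
    have hσy : ((σ : ℂ) • inclOp y, (0 : E)) ∈ M := by
      convert M.sub_mem (hB _ hy) (M.smul_mem (Complex.exp (θ * I)) hy) using 1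
      ext <;> simp [BS_inr]
    convert M.smul_mem (σ : ℂ)⁻¹ hσy using 1
    rw [Prod.smul_mk, smul_smul, inv_mul_cancel₀ (ofReal_ne_zero.2 hσ), one_smul, smul_zero]
    rfl
  | succ n ih => simpa [BS_inl, shiftOp_single] using hB _ ih

lemma eq_top_of_BS_invariant_of_inr_mem (hσ : σ ≠ 0) (hMc : IsClosed (M : Set (Hardy E × E)))
    (hB : ∀ v ∈ M, BS σ θ v ∈ M) (hE : ∀ y : E, ((0 : Hardy E), y) ∈ M) : M = ⊤ := by
  refine eq_top_iff.2 fun ⟨f, y⟩ _ => ?_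
  have hf : (f, (0 : E)) ∈ M := by
    have hsum : HasSum (fun n => (lp.single 2 n (f n), (0 : E))) (f, (0 : E)) :=
      (lp.hasSum_single (by norm_num) f).prodMk hasSum_zero
    exact hMc.mem_of_tendsto hsum.tendsto_sum_nat (.of_forall fun _ =>
      M.sum_mem fun n _ => single_inl_mem_of_BS_invariant θ hσ hB (hE _) n)
  simpa using M.add_mem hf (hE y)

lemma eq_bot_of_BSadj_invariant_of_snd_eq_zero (hσ : σ ≠ 0)
    (hBadj : ∀ v ∈ M, BSadj σ θ v ∈ M) (h : ∀ v ∈ M, v.2 = 0) : M = ⊥ := by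
  have hstep : ∀ f : Hardy E, (f, (0 : E)) ∈ M → (f : ℕ → E) 0 = 0 ∧ (tailOp f, (0 : E)) ∈ M := by
    intro f hf
    have hadj := BSadj_inl σ θ f ▸ hBadj _ hf
    have h0 : (σ : ℂ) • (f : ℕ → E) 0 = 0 := h _ hadj
    exact ⟨(smul_eq_zero.1 h0).resolve_left (ofReal_ne_zero.2 hσ), h0 ▸ hadj⟩
  have hcoeff : ∀ n (f : Hardy E), (f, (0 : E)) ∈ M → (f : ℕ → E) n = 0 := by
    intro n
    induction n with
    | zero => exact fun f hf => (hstep f hf).1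
    | succ n ih => exact fun f hf => ih _ (hstep f hf).2
  refine eq_bot_iff.2 fun ⟨f, y⟩ hv => ?_
  obtain rfl : y = 0 := h _ hv
  obtain rfl : f = 0 := lp.ext (funext fun n => hcoeff n f hv)
  exact (Submodule.mem_bot ℂ).2 rfl

end Reducing

theorem brownian_shift_irreducible_general
    (σ θ : ℝ) (hσ : 0 < σ)
    (M : Submodule ℂ (Hardy ℂ × ℂ)) (hMc : IsClosed (M : Set (Hardy ℂ × ℂ)))
    (hB : ∀ v ∈ M, BS σ θ v ∈ M) (hBadj : ∀ v ∈ M, BSadj σ θ v ∈ M) :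
    M = ⊥ ∨ M = ⊤ := by
  by_cases h : ∀ v ∈ M, v.2 = 0
  · exact Or.inl (eq_bot_of_BSadj_invariant_of_snd_eq_zero θ hσ.ne' hBadj h)
  · push Not at h
    obtain ⟨v, hv, hv2⟩ := h
    refine Or.inr (eq_top_of_BS_invariant_of_inr_mem θ hσ.ne' hMc hB fun y => ?_)
    simpa [hv2] using M.smul_mem (y / v.2) (inr_snd_mem_of_BS_reducing θ hσ.ne' hB hBadj hv)

/-- The scalar Brownian shift `B_{σ,e^{iθ}}` on `H²(𝕋) ⊕ ℂ` is irreducible: its only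
reducing subspaces are `{0}` and the whole space. -/
theorem brownian_shift_irreducible
    (σ θ : ℝ) (hσ : 0 < σ) (hθ : θ ∈ Set.Ico 0 (2 * Real.pi))
    (M : Submodule ℂ (Hardy ℂ × ℂ)) (hMc : IsClosed (M : Set (Hardy ℂ × ℂ)))
    (hB : ∀ v ∈ M, BS σ θ v ∈ M) (hBadj : ∀ v ∈ M, BSadj σ θ v ∈ M) :
    M = ⊥ ∨ M = ⊤ :=
  brownian_shift_irreducible_general σ θ hσ M hMc hB hBadj
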